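/- Let d ≥ 1, p ∈ [1,∞] with conjugate exponent p*, and let C ⊆ ℝ^d be a compact convex set. Let ψ be differentiable on an open convex set containing C and λ-strongly convex with respect to the ℓ_p-norm for some λ > 0. Let η > 0, let g_1, …, g_T ∈ ℝ^d, let y_1 ∈ C, and for each t = 1, …, T let y_{t+1} be a minimizer over z ∈ C of ⟨g_t, z⟩ + (1/η)·B_ψ(z; y_t). Let v_1, …, v_{T+1} ∈ C be arbitrary comparators. Define F_ψ = sup_{x ∈ C} ψ(x) − inf_{x ∈ C} ψ(x) and G_ψ = max_{1 ≤ t ≤ T+1} ‖∇ψ(y_t)‖_{p*}. Then Σ_{t=1}^T ⟨g_t, y_t − v_t⟩ ≤ (F_ψ + B_ψ(v_1; y_1))/η + (G_ψ/η)·Σ_{t=1}^T ‖v_t − v_{t+1}‖_p + (η/(2λ))·Σ_{t=1}^T ‖g_t‖_{p*}². -/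

import Mathlib

/-!
The usual online mirror descent analysis. The first-order optimality condition of step `t`,
rewritten with the three-point identity for Bregman divergences, bounds
`⟪g_t, y_{t+1} - v_t⟫` by `(B(v_t; y_t) - B(v_t; y_{t+1}) - B(y_{t+1}; y_t)) / η`. Hölder,
Young and strong convexity absorb the remaining `⟪g_t, y_t - y_{t+1}⟫` into
`η / (2λ) ‖g_t‖_{p*}² + B(y_{t+1}; y_t) / η`. Replacing the comparator `v_t` by `v_{t+1}` in
`B(·; y_{t+1})` costs `ψ(v_{t+1}) - ψ(v_t) + ‖∇ψ(y_{t+1})‖_{p*} ‖v_t - v_{t+1}‖_p`, after which the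
Bregman and `ψ` terms telescope.
-/

open scoped ENNReal RealInnerProductSpace

/-- The ℓ_p norm on `ℝ^d`, for `p ∈ [1, ∞]` (with `‖x‖_∞ = max_i |x i|`). -/
noncomputable def lpnorm {d : ℕ} (p : ℝ≥0∞) (x : EuclideanSpace ℝ (Fin d)) : ℝ :=
  if p = ∞ then ⨆ i, |x i| else (∑ i, |x i| ^ p.toReal) ^ (1 / p.toReal)

/-- The Bregman divergence `B_ψ(x; y) = ψ(x) - ψ(y) - ⟪∇ψ(y), x - y⟫`. -/
noncomputable def breg {d : ℕ} (ψ : EuclideanSpace ℝ (Fin d) → ℝ)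
    (x y : EuclideanSpace ℝ (Fin d)) : ℝ :=
  ψ x - ψ y - ⟪gradient ψ y, x - y⟫

open Finset

lemma IsCompact.sub_le_sSup_image_sub_sInf_image {X : Type*} [TopologicalSpace X] {s : Set X}
    (hs : IsCompact s) {f : X → ℝ} (hf : ContinuousOn f s) {a b : X} (ha : a ∈ s) (hb : b ∈ s) :
    f a - f b ≤ sSup (f '' s) - sInf (f '' s) :=
  sub_le_sub (le_csSup (hs.image_of_continuousOn hf).bddAbove (Set.mem_image_of_mem f ha))
    (csInf_le (hs.image_of_continuousOn hf).bddBelow (Set.mem_image_of_mem f hb))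

lemma IsMinOn.apply_sub_nonneg_of_hasFDerivAt {E : Type*} [NormedAddCommGroup E]
    [NormedSpace ℝ E] {f : E → ℝ} {f' : E →L[ℝ] ℝ} {s : Set E} {x z : E} (hmin : IsMinOn f s x)
    (hf : HasFDerivAt f f' x) (hs : Convex ℝ s) (hx : x ∈ s) (hz : z ∈ s) : 0 ≤ f' (z - x) :=
  hmin.localize.hasFDerivWithinAt_nonneg hf.hasFDerivWithinAt
    (sub_mem_posTangentConeAt_of_segment_subset (hs.segment_subset hx hz))

lemma mul_le_div_mul_sq_add_div_mul_sq {ε δ : ℝ} (hε : 0 < ε) (hδ : 0 < δ) (a b : ℝ) :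
    a * b ≤ ε / (2 * δ) * a ^ 2 + δ / (2 * ε) * b ^ 2 := by
  have h := sq_nonneg (ε * a - δ * b)
  field_simp
  nlinarith

lemma sum_mul_le_sSup_image_mul_sum (a b : ℕ → ℝ) (hb : ∀ t, 0 ≤ b t) (T : ℕ) :
    ∑ t ∈ Icc 1 T, a (t + 1) * b t ≤ sSup (a '' Set.Icc 1 (T + 1)) * ∑ t ∈ Icc 1 T, b t := by
  rw [mul_sum]
  refine sum_le_sum fun t ht => mul_le_mul_of_nonneg_right ?_ (hb t)
  refine le_csSup ((Set.finite_Icc 1 (T + 1)).image a).bddAbove ⟨t + 1, ?_, rfl⟩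
  simp only [mem_Icc] at ht
  exact ⟨by omega, by omega⟩

section LpNorm

variable {d : ℕ}

lemma lpnorm_nonneg (p : ℝ≥0∞) (x : EuclideanSpace ℝ (Fin d)) : 0 ≤ lpnorm p x := by
  unfold lpnorm
  split
  · exact Real.iSup_nonneg fun i => abs_nonneg _
  · positivity

lemma lpnorm_sub_comm (p : ℝ≥0∞) (x y : EuclideanSpace ℝ (Fin d)) :
    lpnorm p (x - y) = lpnorm p (y - x) := by
  simp only [lpnorm, PiLp.sub_apply, abs_sub_comm]

lemma lpnorm_top (x : EuclideanSpace ℝ (Fin d)) : lpnorm ∞ x = ⨆ i, |x i| := if_pos rfl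

lemma lpnorm_one (x : EuclideanSpace ℝ (Fin d)) : lpnorm 1 x = ∑ i, |x i| := by
  simp [lpnorm]

lemma inner_eq_sum_mul (a b : EuclideanSpace ℝ (Fin d)) : ⟪a, b⟫ = ∑ i, a i * b i := by
  simp [PiLp.inner_apply, mul_comm]

lemma inner_le_lpnorm_top_mul_lpnorm_one (a b : EuclideanSpace ℝ (Fin d)) :
    ⟪a, b⟫ ≤ lpnorm ∞ a * lpnorm 1 b := by
  rw [inner_eq_sum_mul, lpnorm_top, lpnorm_one, mul_sum]
  refine sum_le_sum fun i _ => ?_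
  calc a i * b i ≤ |a i| * |b i| := by rw [← abs_mul]; exact le_abs_self _
    _ ≤ (⨆ j, |a j|) * |b i| := by
      gcongr
      exact le_ciSup (f := fun j => |a j|) (Finite.bddAbove_range _) i

lemma inner_le_lpnorm_mul_lpnorm {p q : ℝ≥0∞} [p.HolderConjugate q]
    (a b : EuclideanSpace ℝ (Fin d)) : ⟪a, b⟫ ≤ lpnorm p a * lpnorm q b := by
  by_cases hp : p = ∞
  · obtain rfl := hp
    obtain rfl : q = 1 := (ENNReal.HolderConjugate.eq_top_iff_eq_one ∞ q).1 rfl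
    exact inner_le_lpnorm_top_mul_lpnorm_one a b
  by_cases hq : q = ∞
  · obtain rfl := hq
    obtain rfl : p = 1 := (ENNReal.HolderConjugate.eq_top_iff_eq_one ∞ p).1 rfl
    rw [real_inner_comm, mul_comm]
    exact inner_le_lpnorm_top_mul_lpnorm_one b a
  simpa [lpnorm, hp, hq, inner_eq_sum_mul] using
    Real.inner_le_Lp_mul_Lq univ a b (ENNReal.HolderConjugate.toReal_of_ne_top hp hq)

end LpNorm

section Bregman

variable {d : ℕ} {ψ : EuclideanSpace ℝ (Fin d) → ℝ}

lemma half_mul_sq_lpnorm_le_breg {p : ℝ≥0∞} {lam : ℝ} {x w : EuclideanSpace ℝ (Fin d)}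
    (hsc : ψ w + ⟪gradient ψ w, x - w⟫ + lam / 2 * lpnorm p (x - w) ^ 2 ≤ ψ x) :
    lam / 2 * lpnorm p (x - w) ^ 2 ≤ breg ψ x w := by
  unfold breg
  linarith

lemma inner_gradient_sub_gradient_eq_breg (ψ : EuclideanSpace ℝ (Fin d) → ℝ)
    (x w z : EuclideanSpace ℝ (Fin d)) :
    ⟪gradient ψ x - gradient ψ w, z - x⟫ = breg ψ z w - breg ψ z x - breg ψ x w := by
  simp only [breg, inner_sub_left, inner_sub_right]
  ring

lemma breg_sub_breg_le {p q : ℝ≥0∞} [q.HolderConjugate p] (ψ : EuclideanSpace ℝ (Fin d) → ℝ)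
    (x u u' : EuclideanSpace ℝ (Fin d)) :
    breg ψ u' x - breg ψ u x ≤ ψ u' - ψ u + lpnorm q (gradient ψ x) * lpnorm p (u - u') := by
  have := inner_le_lpnorm_mul_lpnorm (p := q) (q := p) (gradient ψ x) (u - u')
  simp only [breg, inner_sub_right] at this ⊢
  linarith

lemma hasFDerivAt_breg_left {x : EuclideanSpace ℝ (Fin d)} (hψ : DifferentiableAt ℝ ψ x)
    (w : EuclideanSpace ℝ (Fin d)) :
    HasFDerivAt (fun u => breg ψ u w) (fderiv ℝ ψ x - innerSL ℝ (gradient ψ w)) x := by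
  have hbreg : (fun u => breg ψ u w) =
      fun u => ψ u - ψ w - (⟪gradient ψ w, u⟫ - ⟪gradient ψ w, w⟫) := by
    funext u
    simp only [breg, inner_sub_right]
  rw [hbreg]
  exact (hψ.hasFDerivAt.sub_const _).sub ((innerSL ℝ (gradient ψ w)).hasFDerivAt.sub_const _)

lemma inner_sub_le_of_isMinOn_breg {C : Set (EuclideanSpace ℝ (Fin d))} (hC : Convex ℝ C)
    {η : ℝ} (hη : 0 < η) {g w x z : EuclideanSpace ℝ (Fin d)} (hψ : DifferentiableAt ℝ ψ x)
    (hx : x ∈ C) (hz : z ∈ C)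
    (hmin : IsMinOn (fun u => ⟪g, u⟫ + (1 / η) * breg ψ u w) C x) :
    ⟪g, x - z⟫ ≤ (breg ψ z w - breg ψ z x - breg ψ x w) / η := by
  have hderiv := ((innerSL ℝ g).hasFDerivAt (x := x)).add
    ((hasFDerivAt_breg_left hψ w).const_mul (1 / η))
  have hfo := hmin.apply_sub_nonneg_of_hasFDerivAt hderiv hC hx hz
  simp only [one_div, add_apply, coe_innerSL_apply, smul_apply, sub_apply, smul_eq_mul,
    ← inner_gradient_left] at hfo
  rw [← inner_sub_left, inner_gradient_sub_gradient_eq_breg] at hfo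
  rw [le_div_iff₀ hη, ← neg_sub, inner_neg_right]
  field_simp at hfo
  linarith

lemma inner_sub_le_of_isMinOn_breg_of_strongConvex {p q : ℝ≥0∞} [q.HolderConjugate p]
    {C : Set (EuclideanSpace ℝ (Fin d))} (hC : Convex ℝ C) {lam η : ℝ} (hlam : 0 < lam)
    (hη : 0 < η) {g w x z : EuclideanSpace ℝ (Fin d)} (hψ : DifferentiableAt ℝ ψ x)
    (hx : x ∈ C) (hz : z ∈ C) (hsc : lam / 2 * lpnorm p (x - w) ^ 2 ≤ breg ψ x w)
    (hmin : IsMinOn (fun u => ⟪g, u⟫ + (1 / η) * breg ψ u w) C x) :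
    ⟪g, w - z⟫ ≤ η / (2 * lam) * lpnorm q g ^ 2 + (breg ψ z w - breg ψ z x) / η := by
  have hsc' : lam / 2 * lpnorm p (w - x) ^ 2 ≤ breg ψ x w := lpnorm_sub_comm p x w ▸ hsc
  calc ⟪g, w - z⟫ = ⟪g, w - x⟫ + ⟪g, x - z⟫ := by rw [← inner_add_right, sub_add_sub_cancel]
    _ ≤ lpnorm q g * lpnorm p (w - x) + (breg ψ z w - breg ψ z x - breg ψ x w) / η :=
      add_le_add (inner_le_lpnorm_mul_lpnorm g (w - x))
        (inner_sub_le_of_isMinOn_breg hC hη hψ hx hz hmin)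
    _ ≤ η / (2 * lam) * lpnorm q g ^ 2 + lam / (2 * η) * lpnorm p (w - x) ^ 2
        + (breg ψ z w - breg ψ z x - breg ψ x w) / η := by
      gcongr
      exact mul_le_div_mul_sq_add_div_mul_sq hη hlam _ _
    _ = η / (2 * lam) * lpnorm q g ^ 2 + (breg ψ z w - breg ψ z x) / η
        - (breg ψ x w - lam / 2 * lpnorm p (w - x) ^ 2) / η := by
      field_simp
      ring
    _ ≤ _ := sub_le_self _ (div_nonneg (sub_nonneg.2 hsc') hη.le)

end Bregman

theorem mirrorDescent_dynamicRegret_le {d : ℕ} {p q : ℝ≥0∞} [q.HolderConjugate p]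
    {C : Set (EuclideanSpace ℝ (Fin d))} (hC : Convex ℝ C) {ψ : EuclideanSpace ℝ (Fin d) → ℝ}
    (hψ : ∀ x ∈ C, DifferentiableAt ℝ ψ x) {lam : ℝ} (hlam : 0 < lam)
    (hsc : ∀ x ∈ C, ∀ w ∈ C, lam / 2 * lpnorm p (x - w) ^ 2 ≤ breg ψ x w)
    {η : ℝ} (hη : 0 < η) {T : ℕ} (hT : 1 ≤ T) {g y v : ℕ → EuclideanSpace ℝ (Fin d)}
    (hy1 : y 1 ∈ C) (hstep : ∀ t ∈ Icc 1 T, y (t + 1) ∈ C ∧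
      IsMinOn (fun z => ⟪g t, z⟫ + (1 / η) * breg ψ z (y t)) C (y (t + 1)))
    (hv : ∀ t ∈ Icc 1 T, v t ∈ C) :
    ∑ t ∈ Icc 1 T, ⟪g t, y t - v t⟫ ≤
      η / (2 * lam) * ∑ t ∈ Icc 1 T, lpnorm q (g t) ^ 2
      + (breg ψ (v 1) (y 1) - breg ψ (v (T + 1)) (y (T + 1)) + (ψ (v (T + 1)) - ψ (v 1))
        + ∑ t ∈ Icc 1 T, lpnorm q (gradient ψ (y (t + 1))) * lpnorm p (v t - v (t + 1))) / η := by
  have hy : ∀ t ∈ Icc 1 T, y t ∈ C := by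
    rintro (_ | _ | s) ht
    · simp at ht
    · exact hy1
    · exact (hstep (s + 1) (by simp at ht ⊢; omega)).1
  have hstep_le : ∀ t ∈ Icc 1 T, ⟪g t, y t - v t⟫ ≤ η / (2 * lam) * lpnorm q (g t) ^ 2
      + (-(breg ψ (v (t + 1)) (y (t + 1)) - breg ψ (v t) (y t)) + (ψ (v (t + 1)) - ψ (v t))
        + lpnorm q (gradient ψ (y (t + 1))) * lpnorm p (v t - v (t + 1))) / η := by
    intro t ht
    have hyt' := (hstep t ht).1
    have hshift := breg_sub_breg_le (p := p) (q := q) ψ (y (t + 1)) (v t) (v (t + 1))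
    calc ⟪g t, y t - v t⟫
        ≤ η / (2 * lam) * lpnorm q (g t) ^ 2
          + (breg ψ (v t) (y t) - breg ψ (v t) (y (t + 1))) / η :=
          inner_sub_le_of_isMinOn_breg_of_strongConvex hC hlam hη (hψ _ hyt') hyt' (hv t ht)
            (hsc _ hyt' _ (hy t ht)) (hstep t ht).2
      _ ≤ _ := (add_le_add_iff_left _).2 (div_le_div_of_nonneg_right (by linarith) hη.le)
  refine (sum_le_sum hstep_le).trans_eq ?_
  rw [sum_add_distrib, ← mul_sum, ← sum_div, sum_add_distrib, sum_add_distrib, sum_neg_distrib,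
    sum_Icc_sub hT (fun t => breg ψ (v t) (y t)), sum_Icc_sub hT (fun t => ψ (v t)), neg_sub]

theorem stmt_4_general (d : ℕ) (p ps : ℝ≥0∞)
    (hconj : 1 / p + 1 / ps = 1)
    (C U : Set (EuclideanSpace ℝ (Fin d)))
    (hCcomp : IsCompact C) (hCconv : Convex ℝ C)
    (hCU : C ⊆ U)
    (ψ : EuclideanSpace ℝ (Fin d) → ℝ)
    (hdiff : ∀ x ∈ U, DifferentiableAt ℝ ψ x)
    (lam : ℝ) (hlam : 0 < lam)
    (hsc : ∀ x ∈ U, ∀ w ∈ U,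
      ψ w + ⟪gradient ψ w, x - w⟫ + lam / 2 * (lpnorm p (x - w)) ^ 2 ≤ ψ x)
    (η : ℝ) (hη : 0 < η) (T : ℕ) (hT : 1 ≤ T)
    (g y v : ℕ → EuclideanSpace ℝ (Fin d))
    (hy1 : y 1 ∈ C)
    (hstep : ∀ t ∈ Finset.Icc 1 T, y (t + 1) ∈ C ∧
      ∀ z ∈ C, ⟪g t, y (t + 1)⟫ + (1 / η) * breg ψ (y (t + 1)) (y t) ≤
        ⟪g t, z⟫ + (1 / η) * breg ψ z (y t))
    (hv : ∀ t ∈ Finset.Icc 1 (T + 1), v t ∈ C) :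
    ∑ t ∈ Finset.Icc 1 T, ⟪g t, y t - v t⟫ ≤
      (sSup (ψ '' C) - sInf (ψ '' C) + breg ψ (v 1) (y 1)) / η
      + (sSup ((fun t => lpnorm ps (gradient ψ (y t))) '' Set.Icc 1 (T + 1)) / η)
          * ∑ t ∈ Finset.Icc 1 T, lpnorm p (v t - v (t + 1))
      + (η / (2 * lam)) * ∑ t ∈ Finset.Icc 1 T, (lpnorm ps (g t)) ^ 2 := by
  have : ps.HolderConjugate p :=
    ENNReal.holderConjugate_iff.2 (by simpa only [one_div, add_comm] using hconj)
  have hscC : ∀ x ∈ C, ∀ w ∈ C, lam / 2 * lpnorm p (x - w) ^ 2 ≤ breg ψ x w :=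
    fun x hx w hw => half_mul_sq_lpnorm_le_breg (hsc x (hCU hx) w (hCU hw))
  have hregret := mirrorDescent_dynamicRegret_le (q := ps) hCconv
    (fun x hx => hdiff x (hCU hx)) hlam hscC hη hT hy1
    (fun t ht => ⟨(hstep t ht).1, isMinOn_iff.2 (hstep t ht).2⟩)
    (fun t ht => hv t (Icc_subset_Icc_right (by omega) ht))
  have hvT : v (T + 1) ∈ C := hv (T + 1) (by simp)
  have hbreg_nonneg : 0 ≤ breg ψ (v (T + 1)) (y (T + 1)) :=
    (by positivity : 0 ≤ lam / 2 * lpnorm p _ ^ 2).trans (hscC _ hvT _ (hstep T (by simp [hT])).1)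
  have hψ_range : ψ (v (T + 1)) - ψ (v 1) ≤ sSup (ψ '' C) - sInf (ψ '' C) :=
    hCcomp.sub_le_sSup_image_sub_sInf_image
      (fun x hx => (hdiff x (hCU hx)).continuousAt.continuousWithinAt) hvT (hv 1 (by simp))
  have hG := sum_mul_le_sSup_image_mul_sum (fun t => lpnorm ps (gradient ψ (y t)))
    (fun t => lpnorm p (v t - v (t + 1))) (fun _ => lpnorm_nonneg _ _) T
  calc ∑ t ∈ Icc 1 T, ⟪g t, y t - v t⟫
      ≤ η / (2 * lam) * ∑ t ∈ Icc 1 T, lpnorm ps (g t) ^ 2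
        + (sSup (ψ '' C) - sInf (ψ '' C) + breg ψ (v 1) (y 1)
          + sSup ((fun t => lpnorm ps (gradient ψ (y t))) '' Set.Icc 1 (T + 1))
            * ∑ t ∈ Icc 1 T, lpnorm p (v t - v (t + 1))) / η :=
        hregret.trans ((add_le_add_iff_left _).2 (div_le_div_of_nonneg_right (by linarith) hη.le))
    _ = _ := by ring

theorem stmt_4 (d : ℕ) (hd : 1 ≤ d) (p ps : ℝ≥0∞) (hp : 1 ≤ p)
    (hconj : 1 / p + 1 / ps = 1)
    (C U : Set (EuclideanSpace ℝ (Fin d)))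
    (hCcomp : IsCompact C) (hCconv : Convex ℝ C)
    (hUopen : IsOpen U) (hUconv : Convex ℝ U) (hCU : C ⊆ U)
    (ψ : EuclideanSpace ℝ (Fin d) → ℝ)
    (hdiff : ∀ x ∈ U, DifferentiableAt ℝ ψ x)
    (lam : ℝ) (hlam : 0 < lam)
    (hsc : ∀ x ∈ U, ∀ w ∈ U,
      ψ w + ⟪gradient ψ w, x - w⟫ + lam / 2 * (lpnorm p (x - w)) ^ 2 ≤ ψ x)
    (η : ℝ) (hη : 0 < η) (T : ℕ) (hT : 1 ≤ T)
    (g y v : ℕ → EuclideanSpace ℝ (Fin d))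
    (hy1 : y 1 ∈ C)
    (hstep : ∀ t ∈ Finset.Icc 1 T, y (t + 1) ∈ C ∧
      ∀ z ∈ C, ⟪g t, y (t + 1)⟫ + (1 / η) * breg ψ (y (t + 1)) (y t) ≤
        ⟪g t, z⟫ + (1 / η) * breg ψ z (y t))
    (hv : ∀ t ∈ Finset.Icc 1 (T + 1), v t ∈ C) :
    ∑ t ∈ Finset.Icc 1 T, ⟪g t, y t - v t⟫ ≤
      (sSup (ψ '' C) - sInf (ψ '' C) + breg ψ (v 1) (y 1)) / η
      + (sSup ((fun t => lpnorm ps (gradient ψ (y t))) '' Set.Icc 1 (T + 1)) / η)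
          * ∑ t ∈ Finset.Icc 1 T, lpnorm p (v t - v (t + 1))
      + (η / (2 * lam)) * ∑ t ∈ Finset.Icc 1 T, (lpnorm ps (g t)) ^ 2 :=
  stmt_4_general d p ps hconj C U hCcomp hCconv hCU ψ hdiff lam hlam hsc η hη T hT g y v hy1 hstep
    hv
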